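/- arXiv:1701.03723 — 3 statements merged into one kernel-verified Lean document; each statement's English description precedes it below -/
import Mathlib

section
/- For every positive integer k and every nonnegative integer r, and every integer p with p ≥ r+2, the Euler-type sum S(k, r+1; p) = Σ_{n=1}^∞ h_n^{(r+1)}(k)/n^p satisfies S(k, r+1; p) = (1/r!) · Σ_{l=1}^{r+1} [r+1; l] · Σ_{i+j=k, i,j ≥ 0} (−1)^i · ζ_r^⋆({1}_i) · U_{j,r}(p+1−l). -/
open Finset

/-- Multiple harmonic number `ζ_n({1}_m)`:
`ζ_n({1}_m) = ∑_{n ≥ n₁ > n₂ > ⋯ > n_m ≥ 1} 1/(n₁ ⋯ n_m)`, with `ζ_n({1}_0) = 1`. -/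
noncomputable def mhn : ℕ → ℕ → ℝ
  | _, 0 => 1
  | n, m + 1 => ∑ k ∈ Finset.Icc 1 n, mhn (k - 1) m / (k : ℝ)

/-- Multiple harmonic star number `ζ_n^⋆({1}_m)`:
`ζ_n^⋆({1}_m) = ∑_{n ≥ n₁ ≥ n₂ ≥ ⋯ ≥ n_m ≥ 1} 1/(n₁ ⋯ n_m)`, with `ζ_n^⋆({1}_0) = 1`. -/
noncomputable def mhsn : ℕ → ℕ → ℝ
  | _, 0 => 1
  | n, m + 1 => ∑ k ∈ Finset.Icc 1 n, mhsn k m / (k : ℝ)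

/-- Multiple harmonic number with repeated real argument `p`: `ζ_n({p}_m)`. -/
noncomputable def mhnP (p : ℝ) : ℕ → ℕ → ℝ
  | _, 0 => 1
  | n, m + 1 => ∑ k ∈ Finset.Icc 1 n, mhnP p (k - 1) m / (k : ℝ) ^ p

/-- Multiple harmonic star number with repeated real argument `p`: `ζ_n^⋆({p}_m)`. -/
noncomputable def mhsnP (p : ℝ) : ℕ → ℕ → ℝ
  | _, 0 => 1
  | n, m + 1 => ∑ k ∈ Finset.Icc 1 n, mhsnP p k m / (k : ℝ) ^ p

/-- Generalized harmonic number `H_n^{(p)} = ∑_{j=1}^n 1/j^p`. -/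
noncomputable def genH (p n : ℕ) : ℝ := ∑ j ∈ Finset.Icc 1 n, 1 / (j : ℝ) ^ p

/-- Auxiliary: `hypAux m n k = h_n^{(m+1)}(k)` for `k ≥ 1` (peel off the weak outer indices). -/
noncomputable def hypAux : ℕ → ℕ → ℕ → ℝ
  | 0, n, k => mhn n k
  | m + 1, n, k => ∑ j ∈ Finset.Icc 1 n, hypAux m j k

/-- Generalized hyperharmonic number `h_n^{(m)}(k)`, with the convention
`h_n^{(m)}(0) = C(m+n-1, m-1)`. -/
noncomputable def gh (n m k : ℕ) : ℝ :=
  if k = 0 then (Nat.choose (m + n - 1) (m - 1) : ℝ) else hypAux (m - 1) n k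

/-- Unsigned Stirling number of the first kind, defined by the standard recurrence,
equivalently by `x(x+1)⋯(x+n-1) = ∑_{k=0}^n [n; k] xᵏ`. -/
def stir1 : ℕ → ℕ → ℕ
  | 0, 0 => 1
  | 0, _ + 1 => 0
  | _ + 1, 0 => 0
  | n + 1, k + 1 => stir1 n k + n * stir1 n (k + 1)

/-- Multiple zeta value `ζ(p, {1}_m)`. -/
noncomputable def mzv (p m : ℕ) : ℝ := ∑' n : ℕ, mhn n m / (n + 1 : ℝ) ^ p

/-- Multiple zeta star value `ζ^⋆(p, {1}_m)`. -/
noncomputable def mzvStar (p m : ℕ) : ℝ := ∑' n : ℕ, mhsn (n + 1) m / (n + 1 : ℝ) ^ p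

/-- Riemann zeta value `ζ(p) = ∑_{n=1}^∞ 1/n^p`. -/
noncomputable def rz (p : ℕ) : ℝ := ∑' n : ℕ, 1 / (n + 1 : ℝ) ^ p

/-- `U_{m,r}(p) = ∑_{n=1}^∞ ζ_{n+r}({1}_m)/n^p`. -/
noncomputable def Usum (m r p : ℕ) : ℝ := ∑' n : ℕ, mhn (n + 1 + r) m / (n + 1 : ℝ) ^ p

/-- Strictly decreasing `q`-fold sum `Ā_q(n) = ∑_{1 ≤ k_q < ⋯ < k₁ ≤ n} a_{k₁}⋯a_{k_q}`,
with `Ā_0(n) = 1` (so `Ā_q(n) = 0` when `n < q`). -/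
def sdSum {R : Type*} [Semiring R] (a : ℕ → R) : ℕ → ℕ → R
  | _, 0 => 1
  | n, q + 1 => ∑ k ∈ Finset.Icc 1 n, a k * sdSum a (k - 1) q

/-- Weakly decreasing `q`-fold sum `A_q(n) = ∑_{1 ≤ k_q ≤ ⋯ ≤ k₁ ≤ n} a_{k₁}⋯a_{k_q}`,
with `A_0(n) = 1`. -/
def wdSum {R : Type*} [Semiring R] (a : ℕ → R) : ℕ → ℕ → R
  | _, 0 => 1
  | n, q + 1 => ∑ k ∈ Finset.Icc 1 n, a k * wdSum a k q

/-!
Write `e_k(x₁, …, x_n)` for the elementary sums `sdSum` and `H_k(x₁, …, x_n)` for the complete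
sums `wdSum`. Peeling off the weak outer indices one at a time (`h_n^{(r+1)} = ∑_{j ≤ n} h_j^{(r)}`)
gives `h_n^{(r+1)}(k) = C(n+r, r) · e_k(1/(r+1), …, 1/(r+n))`. The generating functions
`∏ (1 + a_m t)` of `e` and `∏ (1 - a_m t)⁻¹` of `H` are inverse to each other, and this rewrites
`e_k(1/(r+1), …, 1/(r+n))` as `∑_i (-1)^i ζ_r^⋆({1}_i) ζ_{n+r}({1}_{k-i})`. Finally
`r! C(n+r, r) = (n+1)⋯(n+r) = ∑_l [r+1; l] n^{l-1}`; dividing by `n^p` and summing over `n` gives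
the formula, every series involved converging because `ζ_m({1}_j) = O(m^{1/2})`.
-/

section GeneratingFunctions

open PowerSeries

section Semiring

variable {R : Type*} [Semiring R] (a : ℕ → R)

lemma sdSum_succ_succ (n q : ℕ) :
    sdSum a (n + 1) (q + 1) = sdSum a n (q + 1) + a (n + 1) * sdSum a n q :=
  sum_Icc_succ_top (by omega) _

lemma wdSum_succ_succ (n q : ℕ) :
    wdSum a (n + 1) (q + 1) = wdSum a n (q + 1) + a (n + 1) * wdSum a (n + 1) q :=
  sum_Icc_succ_top (by omega) _

end Semiring

section CommSemiring

variable {R : Type*} [CommSemiring R]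

lemma PowerSeries.coeff_succ_mul_one_add_C_mul_X (f : R⟦X⟧) (c : R) (q : ℕ) :
    coeff (q + 1) (f * (1 + C c * X)) = coeff (q + 1) f + c * coeff q f := by
  rw [mul_add, mul_one, map_add, mul_left_comm, coeff_C_mul, coeff_succ_mul_X]

variable (a : ℕ → R)

lemma mk_sdSum_zero : PowerSeries.mk (sdSum a 0) = 1 := by
  ext (_ | q) <;> simp [sdSum]

lemma mk_sdSum_succ (n : ℕ) :
    PowerSeries.mk (sdSum a (n + 1)) = PowerSeries.mk (sdSum a n) * (1 + C (a (n + 1)) * X) := by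
  ext (_ | q)
  · simp [sdSum]
  · rw [coeff_succ_mul_one_add_C_mul_X]
    simp [sdSum_succ_succ]

lemma mk_sdSum_add (n r : ℕ) :
    PowerSeries.mk (sdSum a (n + r)) =
      PowerSeries.mk (sdSum a r) * PowerSeries.mk (sdSum (fun m => a (m + r)) n) := by
  induction n with
  | zero => simp [mk_sdSum_zero]
  | succ n ih =>
    rw [Nat.add_right_comm, mk_sdSum_succ, ih, mk_sdSum_succ, mul_assoc, Nat.add_right_comm]

lemma sdSum_succ_succ_shift (n q : ℕ) :
    sdSum a (n + 1) (q + 1) =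
      sdSum (fun m => a (m + 1)) n (q + 1) + a 1 * sdSum (fun m => a (m + 1)) n q := by
  have h1 : PowerSeries.mk (sdSum a 1) = 1 + C (a 1) * X := by
    simpa [mk_sdSum_zero] using mk_sdSum_succ a 0
  have h := congrArg (coeff (q + 1)) (mk_sdSum_add a n 1)
  rw [h1, mul_comm, coeff_succ_mul_one_add_C_mul_X] at h
  simpa using h

end CommSemiring

section CommRing

variable {R : Type*} [CommRing R] (a : ℕ → R)

lemma mk_wdSum_succ_mul (n : ℕ) :
    PowerSeries.mk (fun i => (-1) ^ i * wdSum a (n + 1) i) * (1 + C (a (n + 1)) * X) =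
      PowerSeries.mk (fun i => (-1) ^ i * wdSum a n i) := by
  ext (_ | q)
  · simp [wdSum]
  · rw [coeff_succ_mul_one_add_C_mul_X]
    simp only [coeff_mk, wdSum_succ_succ]
    ring

lemma mk_wdSum_mul_mk_sdSum (n : ℕ) :
    PowerSeries.mk (fun i => (-1) ^ i * wdSum a n i) * PowerSeries.mk (sdSum a n) = 1 := by
  induction n with
  | zero =>
    rw [mk_sdSum_zero, mul_one]
    ext (_ | q) <;> simp [wdSum]
  | succ n ih => rw [mk_sdSum_succ, ← mul_assoc, mul_right_comm, mk_wdSum_succ_mul, ih]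

lemma sum_range_neg_one_pow_mul_wdSum_mul_sdSum_add (n r k : ℕ) :
    ∑ i ∈ range (k + 1), (-1) ^ i * wdSum a r i * sdSum a (n + r) (k - i) =
      sdSum (fun m => a (m + r)) n k := by
  have h : PowerSeries.mk (fun i => (-1) ^ i * wdSum a r i) * PowerSeries.mk (sdSum a (n + r)) =
      PowerSeries.mk (sdSum (fun m => a (m + r)) n) := by
    rw [mk_sdSum_add, ← mul_assoc, mk_wdSum_mul_mk_sdSum, one_mul]
  simpa [coeff_mul, Nat.sum_antidiagonal_eq_sum_range_succ_mk] using congrArg (coeff k) h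

end CommRing

end GeneratingFunctions

lemma mhn_eq_sdSum (n m : ℕ) : mhn n m = sdSum (fun k : ℕ => (k : ℝ)⁻¹) n m := by
  induction m generalizing n with
  | zero => rfl
  | succ m ih => simp only [mhn, sdSum, ih, div_eq_inv_mul]

lemma mhsn_eq_wdSum (n m : ℕ) : mhsn n m = wdSum (fun k : ℕ => (k : ℝ)⁻¹) n m := by
  induction m generalizing n with
  | zero => rfl
  | succ m ih => simp only [mhsn, wdSum, ih, div_eq_inv_mul]

lemma hypAux_succ_succ (r n k : ℕ) :
    hypAux (r + 1) (n + 1) k = hypAux (r + 1) n k + hypAux r (n + 1) k :=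
  sum_Icc_succ_top (by omega) _

lemma hypAux_succ_eq_choose_mul_sdSum (r n k : ℕ) :
    hypAux r n (k + 1) = (n + r).choose r * sdSum (fun m => ((m + r : ℕ) : ℝ)⁻¹) n (k + 1) := by
  induction r generalizing n with
  | zero => simp [hypAux, mhn_eq_sdSum]
  | succ r ihr =>
    induction n with
    | zero => simp [hypAux, sdSum]
    | succ n ihn =>
      have hshift : sdSum (fun m => ((m + r : ℕ) : ℝ)⁻¹) (n + 1) (k + 1) =
          sdSum (fun m => ((m + (r + 1) : ℕ) : ℝ)⁻¹) n (k + 1) +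
            ((r : ℝ) + 1)⁻¹ * sdSum (fun m => ((m + (r + 1) : ℕ) : ℝ)⁻¹) n k := by
        have hidx : ∀ m, m + 1 + r = m + (r + 1) := fun m => by omega
        rw [sdSum_succ_succ_shift]
        simp only [hidx, zero_add, Nat.cast_add, Nat.cast_one]
      have hpascal : ((n + 1 + r + 1).choose (r + 1) : ℝ) =
          (n + 1 + r).choose r + (n + 1 + r).choose (r + 1) := by
        exact_mod_cast Nat.choose_succ_succ' (n + 1 + r) r
      have habsorb : ((n + 1 + r : ℕ) + 1 : ℝ) * (n + 1 + r).choose r =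
          (n + 1 + r + 1).choose (r + 1) * (r + 1) := by
        exact_mod_cast Nat.add_one_mul_choose_eq (n + 1 + r) r
      rw [hypAux_succ_succ, ihn, ihr, hshift, sdSum_succ_succ,
        show n + 1 + (r + 1) = n + 1 + r + 1 by omega, show n + (r + 1) = n + 1 + r by omega]
      set X := sdSum (fun m => ((m + (r + 1) : ℕ) : ℝ)⁻¹) n (k + 1)
      set Y := sdSum (fun m => ((m + (r + 1) : ℕ) : ℝ)⁻¹) n k
      push_cast at habsorb ⊢
      field_simp
      linear_combination (-((r : ℝ) + 1) * X * ((n : ℝ) + 1 + r + 1)) * hpascal + Y * habsorb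

lemma gh_eq_choose_mul_sdSum (n r k : ℕ) :
    gh n (r + 1) k = (n + r).choose r * sdSum (fun m => ((m + r : ℕ) : ℝ)⁻¹) n k := by
  cases k with
  | zero => simp [gh, sdSum, show r + 1 + n - 1 = n + r by omega]
  | succ k => simp [gh, hypAux_succ_eq_choose_mul_sdSum]

lemma stir1_eq_stirlingFirst (n k : ℕ) : stir1 n k = Nat.stirlingFirst n k := by
  induction n generalizing k with
  | zero => cases k <;> rfl
  | succ n ih =>
    cases k with
    | zero => rfl
    | succ k => simp only [stir1, Nat.stirlingFirst, ih, Nat.add_comm]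

lemma prod_range_add_eq_sum_stir1 {R : Type*} [CommSemiring R] (x : R) (n : ℕ) :
    ∏ t ∈ range n, (x + t) = ∑ l ∈ range (n + 1), (stir1 n l : R) * x ^ l := by
  induction n with
  | zero => simp [stir1]
  | succ n ih =>
    have htop : ∑ l ∈ range (n + 1), (n : R) * stir1 n (l + 1) * x ^ (l + 1) =
        ∑ l ∈ range (n + 1), (n : R) * stir1 n l * x ^ l := by
      cases n with
      | zero => simp
      | succ n =>
        rw [sum_range_succ, sum_range_succ' _ (n + 1), stir1_eq_stirlingFirst _ (n + 2),
          Nat.stirlingFirst_eq_zero_of_lt (by omega)]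
        simp [stir1]
    rw [prod_range_succ, ih, sum_range_succ' _ (n + 1)]
    simp only [stir1, Nat.cast_add, Nat.cast_mul, add_mul, sum_add_distrib, htop]
    rw [Nat.cast_zero, zero_mul, add_zero, mul_add, sum_mul, sum_mul]
    congr 1 <;> exact sum_congr rfl fun l _ => by ring

lemma choose_mul_factorial_eq_sum_stir1 (n r : ℕ) :
    ((n + 1 + r).choose r : ℝ) * r.factorial =
      ∑ l ∈ Icc 1 (r + 1), (stir1 (r + 1) l : ℝ) * ((n : ℝ) + 1) ^ (l - 1) := by
  have hasc :
      ∏ t ∈ range r, ((n : ℝ) + 1 + (t + 1 : ℕ)) = (n + 1 + r).choose r * r.factorial := by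
    have h := Nat.ascFactorial_eq_factorial_mul_choose (n + 1) r
    rw [Nat.ascFactorial_eq_prod_range, mul_comm] at h
    exact_mod_cast (prod_congr rfl fun t _ => by ring).trans h
  have h := prod_range_add_eq_sum_stir1 ((n : ℝ) + 1) (r + 1)
  rw [prod_range_succ', sum_range_succ', hasc] at h
  have hx : (n : ℝ) + 1 ≠ 0 := by positivity
  rw [← Ico_add_one_right_eq_Icc, sum_Ico_eq_sum_range, ← mul_left_inj' hx]
  rw [show stir1 (r + 1) 0 = 0 from rfl, Nat.cast_zero, add_zero, zero_mul, add_zero] at h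
  rw [h, sum_mul, Nat.add_sub_cancel]
  exact sum_congr rfl fun l _ => by rw [Nat.add_comm 1 l, Nat.add_sub_cancel, pow_succ, mul_assoc]

lemma harmonic_monotone : Monotone harmonic :=
  monotone_nat_of_le_succ fun n => by
    rw [harmonic_succ]
    exact le_add_of_nonneg_right (by positivity)

lemma harmonic_nonneg (n : ℕ) : 0 ≤ harmonic n :=
  harmonic_zero ▸ harmonic_monotone (Nat.zero_le n)

lemma mhn_nonneg (n m : ℕ) : 0 ≤ mhn n m := by
  rw [mhn_eq_sdSum]
  induction m generalizing n with
  | zero => exact zero_le_one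
  | succ m ih => exact sum_nonneg fun k _ => mul_nonneg (by positivity) (ih _)

lemma mhn_le_harmonic_pow (n m : ℕ) : mhn n m ≤ (harmonic n : ℝ) ^ m := by
  induction m generalizing n with
  | zero => simp [mhn]
  | succ m ih =>
    calc mhn n (m + 1) = ∑ k ∈ Icc 1 n, mhn (k - 1) m * (k : ℝ)⁻¹ := by
          simp only [mhn, div_eq_mul_inv]
      _ ≤ ∑ k ∈ Icc 1 n, (harmonic n : ℝ) ^ m * (k : ℝ)⁻¹ := by
          refine sum_le_sum fun k hk => mul_le_mul_of_nonneg_right ?_ (by positivity)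
          refine (ih _).trans (pow_le_pow_left₀ (by exact_mod_cast harmonic_nonneg _) ?_ m)
          exact_mod_cast harmonic_monotone (by have := (mem_Icc.mp hk).2; omega)
      _ = (harmonic n : ℝ) ^ (m + 1) := by
          rw [← mul_sum, pow_succ, harmonic_eq_sum_Icc]
          push_cast
          rfl

lemma harmonic_le_mul_rpow {ε : ℝ} (hε : 0 < ε) (n : ℕ) :
    (harmonic n : ℝ) ≤ (1 + ε⁻¹) * (n : ℝ) ^ ε := by
  rcases Nat.eq_zero_or_pos n with rfl | hn
  · simp [Real.zero_rpow hε.ne']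
  have hone : 1 ≤ (n : ℝ) ^ ε := Real.one_le_rpow (by exact_mod_cast hn) hε.le
  calc (harmonic n : ℝ) ≤ 1 + Real.log n := harmonic_le_one_add_log n
    _ ≤ (n : ℝ) ^ ε + (n : ℝ) ^ ε / ε := add_le_add hone (Real.log_natCast_le_rpow_div n hε)
    _ = (1 + ε⁻¹) * (n : ℝ) ^ ε := by ring

lemma exists_mhn_le_mul_rpow (j : ℕ) {δ : ℝ} (hδ : 0 < δ) :
    ∃ C, ∀ m : ℕ, 1 ≤ m → mhn m j ≤ C * (m : ℝ) ^ δ := by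
  set ε := δ / (j + 1)
  have hε : 0 < ε := by positivity
  refine ⟨(1 + ε⁻¹) ^ j, fun m hm => ?_⟩
  have hm' : (1 : ℝ) ≤ m := by exact_mod_cast hm
  calc mhn m j ≤ (harmonic m : ℝ) ^ j := mhn_le_harmonic_pow m j
    _ ≤ ((1 + ε⁻¹) * (m : ℝ) ^ ε) ^ j :=
        pow_le_pow_left₀ (by exact_mod_cast harmonic_nonneg m) (harmonic_le_mul_rpow hε m) j
    _ = (1 + ε⁻¹) ^ j * (m : ℝ) ^ (ε * j) := by
        rw [mul_pow, Real.rpow_mul_natCast (by positivity)]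
    _ ≤ (1 + ε⁻¹) ^ j * (m : ℝ) ^ δ := by
        refine mul_le_mul_of_nonneg_left (Real.rpow_le_rpow_of_exponent_le hm' ?_) (by positivity)
        rw [div_mul_eq_mul_div, div_le_iff₀ (by positivity)]
        nlinarith

lemma summable_mhn_add_div_pow (r j : ℕ) {q : ℕ} (hq : 2 ≤ q) :
    Summable fun n : ℕ => mhn (n + 1 + r) j / ((n : ℝ) + 1) ^ q := by
  obtain ⟨C, hC⟩ := exists_mhn_le_mul_rpow j (δ := 1 / 2) (by norm_num)
  have hg : Summable fun n : ℕ =>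
      C * ((r : ℝ) + 1) ^ (1 / 2 : ℝ) / ((n : ℝ) + 1) ^ (3 / 2 : ℝ) := by
    have h := (Real.summable_one_div_nat_add_rpow 1 (3 / 2)).mpr (by norm_num)
    refine (h.mul_left (C * ((r : ℝ) + 1) ^ (1 / 2 : ℝ))).congr fun n => ?_
    rw [abs_of_pos (by positivity), mul_one_div]
  refine hg.of_nonneg_of_le (fun n => div_nonneg (mhn_nonneg _ _) (by positivity)) fun n => ?_
  have hx : (1 : ℝ) ≤ (n : ℝ) + 1 := by simp
  have hC0 : 0 ≤ C := by simpa using (mhn_nonneg 1 j).trans (hC 1 le_rfl)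
  have hnum :
      mhn (n + 1 + r) j ≤ C * ((r : ℝ) + 1) ^ (1 / 2 : ℝ) * ((n : ℝ) + 1) ^ (1 / 2 : ℝ) := by
    refine (hC _ (by omega)).trans ?_
    rw [mul_assoc, ← Real.mul_rpow (by positivity) (by positivity)]
    refine mul_le_mul_of_nonneg_left (Real.rpow_le_rpow (by positivity) ?_ (by norm_num)) hC0
    push_cast
    nlinarith
  have hden : ((n : ℝ) + 1) ^ (1 / 2 : ℝ) * ((n : ℝ) + 1) ^ (3 / 2 : ℝ) ≤ ((n : ℝ) + 1) ^ q := by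
    rw [← Real.rpow_add (by positivity), ← Real.rpow_natCast]
    exact Real.rpow_le_rpow_of_exponent_le hx (by norm_num; exact_mod_cast hq)
  rw [div_le_div_iff₀ (by positivity) (by positivity)]
  calc mhn (n + 1 + r) j * ((n : ℝ) + 1) ^ (3 / 2 : ℝ)
      ≤ C * ((r : ℝ) + 1) ^ (1 / 2 : ℝ) * ((n : ℝ) + 1) ^ (1 / 2 : ℝ) *
          ((n : ℝ) + 1) ^ (3 / 2 : ℝ) :=
        mul_le_mul_of_nonneg_right hnum (by positivity)
    _ ≤ C * ((r : ℝ) + 1) ^ (1 / 2 : ℝ) * ((n : ℝ) + 1) ^ q := by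
        rw [mul_assoc]
        exact mul_le_mul_of_nonneg_left hden (by positivity)

lemma gh_div_pow_eq_sum_stir1 (n r k p : ℕ) (hp : r ≤ p) :
    gh (n + 1) (r + 1) k / ((n : ℝ) + 1) ^ p =
      1 / (r.factorial : ℝ) * ∑ l ∈ Icc 1 (r + 1), (stir1 (r + 1) l : ℝ) *
        ∑ i ∈ range (k + 1),
          (-1) ^ i * mhsn r i * (mhn (n + 1 + r) (k - i) / ((n : ℝ) + 1) ^ (p + 1 - l)) := by
  set E := ∑ i ∈ range (k + 1), (-1 : ℝ) ^ i * mhsn r i * mhn (n + 1 + r) (k - i)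
  have hE : sdSum (fun m => ((m + r : ℕ) : ℝ)⁻¹) (n + 1) k = E := by
    simp only [E, mhsn_eq_wdSum, mhn_eq_sdSum]
    exact (sum_range_neg_one_pow_mul_wdSum_mul_sdSum_add (fun m : ℕ => (m : ℝ)⁻¹) (n + 1) r k).symm
  have hterm : ∀ l ∈ Icc 1 (r + 1), (stir1 (r + 1) l : ℝ) *
      ∑ i ∈ range (k + 1),
        (-1) ^ i * mhsn r i * (mhn (n + 1 + r) (k - i) / ((n : ℝ) + 1) ^ (p + 1 - l)) =
        (stir1 (r + 1) l : ℝ) * ((n : ℝ) + 1) ^ (l - 1) * E / ((n : ℝ) + 1) ^ p := by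
    intro l hl
    have hpow : ((n : ℝ) + 1) ^ p = ((n : ℝ) + 1) ^ (p + 1 - l) * ((n : ℝ) + 1) ^ (l - 1) := by
      rw [← pow_add]
      congr 1
      have := mem_Icc.mp hl
      omega
    simp only [E, ← mul_div_assoc, ← sum_div, hpow]
    field_simp
  rw [sum_congr rfl hterm, ← sum_div, ← sum_mul, ← choose_mul_factorial_eq_sum_stir1,
    gh_eq_choose_mul_sdSum, hE]
  field_simp

theorem euler_sum_generalized_hyperharmonic_general (k r p : ℕ) (hp : r + 2 ≤ p) :
    ∑' n : ℕ, gh (n + 1) (r + 1) k / (n + 1 : ℝ) ^ p =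
      (1 / (Nat.factorial r : ℝ)) *
        ∑ l ∈ Finset.Icc 1 (r + 1), (stir1 (r + 1) l : ℝ) *
          ∑ i ∈ Finset.range (k + 1),
            (-1 : ℝ) ^ i * mhsn r i * Usum (k - i) r (p + 1 - l) := by
  have hU : ∀ l ∈ Icc 1 (r + 1), ∀ i ∈ range (k + 1),
      HasSum (fun n : ℕ => mhn (n + 1 + r) (k - i) / ((n : ℝ) + 1) ^ (p + 1 - l))
        (Usum (k - i) r (p + 1 - l)) := fun l hl i _ =>
    (summable_mhn_add_div_pow r (k - i) (by have := (mem_Icc.mp hl).2; omega)).hasSum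
  refine HasSum.tsum_eq ?_
  simp only [gh_div_pow_eq_sum_stir1 _ r k p (by omega)]
  exact (hasSum_sum fun l hl =>
    (hasSum_sum fun i hi => (hU l hl i hi).mul_left _).mul_left _).mul_left _

/-- Theorem 1.1: for `k ≥ 1`, `r ≥ 0`, `p ≥ r+2`,
`S(k, r+1; p) = (1/r!) ∑_{l=1}^{r+1} [r+1; l] ∑_{i+j=k} (-1)^i ζ_r^⋆({1}_i) U_{j,r}(p+1-l)`. -/
theorem euler_sum_generalized_hyperharmonic (k r p : ℕ) (hk : 1 ≤ k) (hp : r + 2 ≤ p) :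
    ∑' n : ℕ, gh (n + 1) (r + 1) k / (n + 1 : ℝ) ^ p =
      (1 / (Nat.factorial r : ℝ)) *
        ∑ l ∈ Finset.Icc 1 (r + 1), (stir1 (r + 1) l : ℝ) *
          ∑ i ∈ Finset.range (k + 1),
            (-1 : ℝ) ^ i * mhsn r i * Usum (k - i) r (p + 1 - l) :=
  euler_sum_generalized_hyperharmonic_general k r p hp
end

section
/- For all positive integers m, n and k, the generalized hyperharmonic numbers satisfy the recurrence h_n^{(m)}(k) = ((−1)^{k−1}/k) · Σ_{i=0}^{k−1} (−1)^i · h_n^{(m)}(i) · ( H_{m+n−1}^{(k−i)} − H_{m−1}^{(k−i)} ), where h_n^{(m)}(0) = C(m+n−1, m−1) is the binomial coefficient. -/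
open Finset

/-! For `k ≥ 1`, peeling off the `m - 1` weak outer summations one at a time (Pascal's rule
together with `(N + 1) C(N, m) = (m + 1) C(N + 1, m + 1)`) gives
`h_n^{(m)}(k) = C(m + n - 1, m - 1) · e_k(1/m, …, 1/(m + n - 1))`, and the convention for
`k = 0` fits the same formula. The differences `H_{m+n-1}^{(p)} - H_{m-1}^{(p)}` are the power
sums `p_p` of the same variables, so the recurrence is Newton's identity
`k e_k = ∑_{i<k} (-1)^{k-1+i} e_i p_{k-i}`. -/

noncomputable def esymmInv (s : Finset ℕ) (k : ℕ) : ℝ :=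
  (s.val.map fun j : ℕ => (j : ℝ)⁻¹).esymm k

theorem Multiset.esymm_cons_succ {R : Type*} [CommSemiring R] (a : R) (s : Multiset R) (k : ℕ) :
    (a ::ₘ s).esymm (k + 1) = s.esymm (k + 1) + a * s.esymm k := by
  simp [Multiset.esymm, Multiset.powersetCard_cons, Multiset.map_map,
    Multiset.sum_map_mul_left]

@[simp]
theorem esymmInv_zero (s : Finset ℕ) : esymmInv s 0 = 1 := by
  simp [esymmInv, Multiset.esymm]

@[simp]
theorem esymmInv_empty_succ (k : ℕ) : esymmInv ∅ (k + 1) = 0 := by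
  simp [esymmInv, Multiset.esymm, Multiset.powersetCard_zero_right]

theorem esymmInv_insert_succ {a : ℕ} {s : Finset ℕ} (ha : a ∉ s) (k : ℕ) :
    esymmInv (insert a s) (k + 1) = esymmInv s (k + 1) + (a : ℝ)⁻¹ * esymmInv s k := by
  simp only [esymmInv, insert_val_of_notMem ha, Multiset.map_cons, Multiset.esymm_cons_succ]

theorem mhn_succ_succ (n k : ℕ) : mhn (n + 1) (k + 1) = mhn n (k + 1) + mhn n k / (n + 1) := by
  rw [mhn, sum_Icc_succ_top (by omega), mhn]
  push_cast
  rfl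

theorem mhn_eq_esymmInv (n k : ℕ) : mhn n k = esymmInv (Ioc 0 n) k := by
  induction n generalizing k with
  | zero => cases k <;> simp [mhn]
  | succ n ih =>
    cases k with
    | zero => simp [mhn]
    | succ k =>
      rw [← insert_Ioc_right_eq_Ioc_add_one n.zero_le, esymmInv_insert_succ (by simp), ← ih, ← ih,
        mhn_succ_succ]
      push_cast
      ring

theorem sum_choose_mul_esymmInv (m k n : ℕ) :
    ∑ j ∈ Icc 1 n, ((m + j).choose m : ℝ) * esymmInv (Ioc m (m + j)) (k + 1) =
      ((m + n + 1).choose (m + 1) : ℝ) * esymmInv (Ioc (m + 1) (m + n + 1)) (k + 1) := by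
  induction n with
  | zero => simp
  | succ n ih =>
    rw [sum_Icc_succ_top (by omega), ih, ← add_assoc m n 1,
      ← insert_Ioc_add_one_left_eq_Ioc (show m < m + n + 1 by omega),
      ← insert_Ioc_right_eq_Ioc_add_one (show m + 1 ≤ m + n + 1 by omega),
      esymmInv_insert_succ (by simp), esymmInv_insert_succ (by simp)]
    have pascal : ((m + n + 1 + 1).choose (m + 1) : ℝ) =
        (m + n + 1).choose m + (m + n + 1).choose (m + 1) := by
      exact_mod_cast Nat.choose_succ_succ' (m + n + 1) m
    have absorb : ((m + n + 1).choose m : ℝ) * (m + 1 : ℝ)⁻¹ =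
        (m + n + 1 + 1).choose (m + 1) * (m + n + 1 + 1 : ℝ)⁻¹ := by
      rw [← div_eq_mul_inv, ← div_eq_mul_inv, div_eq_div_iff (by positivity) (by positivity)]
      exact_mod_cast (mul_comm _ _).trans (Nat.add_one_mul_choose_eq (m + n + 1) m)
    push_cast
    linear_combination (-esymmInv (Ioc (m + 1) (m + n + 1)) (k + 1)) * pascal +
      esymmInv (Ioc (m + 1) (m + n + 1)) k * absorb

theorem hypAux_eq_choose_mul_esymmInv (m n k : ℕ) :
    hypAux m n (k + 1) = ((m + n).choose m : ℝ) * esymmInv (Ioc m (m + n)) (k + 1) := by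
  induction m generalizing n with
  | zero => simp [hypAux, mhn_eq_esymmInv]
  | succ m ih =>
    simp only [hypAux, ih, sum_choose_mul_esymmInv]
    ring_nf

theorem gh_succ_eq_choose_mul_esymmInv (n m k : ℕ) :
    gh n (m + 1) k = ((m + n).choose m : ℝ) * esymmInv (Ioc m (m + n)) k := by
  cases k with
  | zero => simp [gh, add_right_comm m 1 n]
  | succ k => simp [gh, hypAux_eq_choose_mul_esymmInv]

theorem genH_sub_genH (p : ℕ) {a b : ℕ} (h : a ≤ b) :
    genH p b - genH p a = ∑ j ∈ Ioc a b, ((j : ℝ)⁻¹) ^ p := by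
  rw [genH, genH, ← zero_add 1, Icc_add_one_left_eq_Ioc, Icc_add_one_left_eq_Ioc,
    ← sum_Ioc_consecutive _ a.zero_le h, add_sub_cancel_left]
  simp only [one_div, inv_pow]

theorem Finset.mul_esymm_map_eq_sum_range {σ R : Type*} [CommRing R] (s : Finset σ)
    (f : σ → R) (k : ℕ) :
    (k + 1) * (s.val.map f).esymm (k + 1) =
      (-1) ^ k * ∑ i ∈ range (k + 1), (-1) ^ i * (s.val.map f).esymm i *
        ∑ j ∈ s, f j ^ (k + 1 - i) := by
  have h := congrArg (MvPolynomial.aeval fun j : s => f j)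
    (MvPolynomial.mul_esymm_eq_sum s R (k + 1))
  simp only [map_mul, map_natCast, map_pow, map_neg, map_one, map_sum,
    MvPolynomial.aeval_esymm_eq_multiset_esymm, MvPolynomial.psum, MvPolynomial.aeval_X] at h
  have hmap : (univ : Finset s).val.map (fun j : s => f j) = s.val.map f := by
    rw [univ_eq_attach, attach_val]
    exact Multiset.attach_map_val' s.val f
  have hpsum (p : ℕ) : ∑ j : s, f j ^ p = ∑ j ∈ s, f j ^ p := sum_coe_sort s (f · ^ p)
  rw [hmap, sum_filter, Nat.sum_antidiagonal_eq_sum_range_succ_mk, sum_range_succ] at h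
  simp only [hpsum, lt_irrefl, if_false, add_zero,
    sum_ite_of_true fun i hi => mem_range.mp hi] at h
  push_cast at h
  linear_combination h

theorem mul_esymmInv_eq_sum_range (s : Finset ℕ) (k : ℕ) :
    (k + 1) * esymmInv s (k + 1) =
      (-1) ^ k * ∑ i ∈ range (k + 1), (-1) ^ i * esymmInv s i *
        ∑ j ∈ s, ((j : ℝ)⁻¹) ^ (k + 1 - i) :=
  mul_esymm_map_eq_sum_range s _ k

theorem gh_recurrence_general (m n k : ℕ) (hm : 1 ≤ m) (hk : 1 ≤ k) :
    gh n m k =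
      ((-1 : ℝ) ^ (k - 1) / (k : ℝ)) *
        ∑ i ∈ Finset.range k,
          (-1 : ℝ) ^ i * gh n m i * (genH (k - i) (m + n - 1) - genH (k - i) (m - 1)) := by
  obtain ⟨k, rfl⟩ := Nat.exists_eq_add_of_le' hk
  obtain ⟨m, rfl⟩ := Nat.exists_eq_add_of_le' hm
  have hsum : ∑ i ∈ range (k + 1), (-1 : ℝ) ^ i * gh n (m + 1) i *
        (genH (k + 1 - i) (m + 1 + n - 1) - genH (k + 1 - i) (m + 1 - 1)) =
      (m + n).choose m * ∑ i ∈ range (k + 1), (-1) ^ i * esymmInv (Ioc m (m + n)) i *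
        ∑ j ∈ Ioc m (m + n), ((j : ℝ)⁻¹) ^ (k + 1 - i) := by
    rw [mul_sum]
    refine sum_congr rfl fun i _ => ?_
    rw [gh_succ_eq_choose_mul_esymmInv, add_right_comm, Nat.add_sub_cancel, Nat.add_sub_cancel,
      genH_sub_genH _ (m.le_add_right n)]
    ring
  rw [hsum, gh_succ_eq_choose_mul_esymmInv, Nat.add_sub_cancel]
  push_cast
  rw [div_mul_eq_mul_div, eq_div_iff (by positivity)]
  linear_combination ((m + n).choose m : ℝ) * mul_esymmInv_eq_sum_range (Ioc m (m + n)) k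

/-- Lemma 2.2: recurrence for the generalized hyperharmonic numbers,
`h_n^{(m)}(k) = ((-1)^{k-1}/k) ∑_{i=0}^{k-1} (-1)^i h_n^{(m)}(i) (H_{m+n-1}^{(k-i)} - H_{m-1}^{(k-i)})`,
where `h_n^{(m)}(0) = C(m+n-1, m-1)`. -/
theorem gh_recurrence (m n k : ℕ) (hm : 1 ≤ m) (hn : 1 ≤ n) (hk : 1 ≤ k) :
    gh n m k =
      ((-1 : ℝ) ^ (k - 1) / (k : ℝ)) *
        ∑ i ∈ Finset.range k,
          (-1 : ℝ) ^ i * gh n m i * (genH (k - i) (m + n - 1) - genH (k - i) (m - 1)) :=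
  gh_recurrence_general m n k hm hk
end

section
/- For integers m ≥ 1, p ≥ 2 and r ≥ 0, the sum V_{m,r}(p) = Σ_{n=1}^∞ ζ_{n+r}^⋆({1}_m)/n^p satisfies V_{m,r}(p) = ζ^⋆(p, {1}_m) + Σ_{j=1}^m Σ_{1 ≤ i_j ≤ ⋯ ≤ i_1 ≤ r} Σ_{n=1}^∞ ζ_n^⋆({1}_{m−j}) / ( n^p (n+i_1)(n+i_2)⋯(n+i_j) ). -/
/-!
Splitting the outermost index range `[1, n + r]` of `ζ_{n+r}^⋆({1}_m)` at `n` gives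
`ζ_{n+r}^⋆({1}_m) = ζ_n^⋆({1}_m) + ∑_{i=1}^r ζ_{n+i}^⋆({1}_{m-1}) / (n + i)`.
Expanding the new terms in the same way (the shift `i` now plays the role of `r`) yields the
finite identity
`ζ_{n+r}^⋆({1}_m) = ∑_{j=0}^m ∑_{r ≥ i₁ ≥ ⋯ ≥ i_j ≥ 1} ζ_n^⋆({1}_{m-j}) / ((n+i₁)⋯(n+i_j))`.
Dividing by `n^p` and summing over `n` is legitimate because `ζ_n^⋆({1}_m) ≤ 2^m √n`, so every
series is dominated by a multiple of `∑ n^{-3/2}`.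
-/

open Finset

def antitoneTuples (j r : ℕ) : Finset (Fin j → ℕ) :=
  (Fintype.piFinset fun _ : Fin j => Icc 1 r).filter fun i => ∀ a b : Fin j, a ≤ b → i b ≤ i a

lemma antitoneTuples_zero (r : ℕ) : antitoneTuples 0 r = {![]} := by
  ext i
  simp [antitoneTuples, eq_iff_true_of_subsingleton]

lemma cons_mem_antitoneTuples {j r a : ℕ} {i : Fin j → ℕ} :
    (Fin.cons a i : Fin (j + 1) → ℕ) ∈ antitoneTuples (j + 1) r ↔
      a ∈ Icc 1 r ∧ i ∈ antitoneTuples j a := by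
  simp only [antitoneTuples, mem_filter, Fintype.mem_piFinset, Fin.forall_fin_succ, Fin.cons_zero,
    Fin.cons_succ, mem_Icc, Fin.succ_le_succ_iff, Fin.zero_le, le_refl, forall_const, true_and,
    Fin.le_zero_iff, Fin.succ_ne_zero, false_imp_iff]
  constructor
  · rintro ⟨⟨ha, hi⟩, hle, hanti⟩
    exact ⟨ha, fun b => ⟨(hi b).1, hle b⟩, hanti⟩
  · rintro ⟨ha, hi, hanti⟩
    exact ⟨⟨ha, fun b => ⟨(hi b).1, (hi b).2.trans ha.2⟩⟩, fun b => (hi b).2, hanti⟩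

lemma sum_antitoneTuples_succ {M : Type*} [AddCommMonoid M] (j r : ℕ)
    (f : (Fin (j + 1) → ℕ) → M) :
    ∑ i ∈ antitoneTuples (j + 1) r, f i =
      ∑ a ∈ Icc 1 r, ∑ i ∈ antitoneTuples j a, f (Fin.cons a i) := by
  rw [sum_sigma']
  refine sum_nbij' (fun i => ⟨i 0, Fin.tail i⟩) (fun q => Fin.cons q.1 q.2) ?_ ?_ ?_ ?_ ?_
  · intro i hi
    rw [← Fin.cons_self_tail i, cons_mem_antitoneTuples] at hi
    simpa using hi
  · intro q hq
    simpa [cons_mem_antitoneTuples] using hq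
  · intro i _
    exact Fin.cons_self_tail i
  · intro q _
    rfl
  · intro i _
    rw [Fin.cons_self_tail]

lemma sum_Icc_one_add {M : Type*} [AddCommMonoid M] (g : ℕ → M) (n r : ℕ) :
    ∑ k ∈ Icc 1 (n + r), g k = ∑ k ∈ Icc 1 n, g k + ∑ i ∈ Icc 1 r, g (n + i) := by
  induction r with
  | zero => simp
  | succ r ih =>
    rw [← add_assoc, sum_Icc_succ_top (by omega), ih, sum_Icc_succ_top (by omega), add_assoc,
      add_assoc]

lemma mhsn_add_succ (m n r : ℕ) :
    mhsn (n + r) (m + 1) = mhsn n (m + 1) + ∑ i ∈ Icc 1 r, mhsn (n + i) m / ((n : ℝ) + i) := by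
  rw [mhsn, mhsn, sum_Icc_one_add]
  simp only [Nat.cast_add]

theorem mhsn_add_eq_sum_range_antitoneTuples (m r n : ℕ) :
    mhsn (n + r) m = ∑ j ∈ range (m + 1), ∑ i ∈ antitoneTuples j r,
      mhsn n (m - j) / ∏ a : Fin j, ((n : ℝ) + i a) := by
  induction m generalizing r with
  | zero => simp [antitoneTuples_zero, mhsn]
  | succ m ih =>
    rw [sum_range_succ', antitoneTuples_zero, sum_singleton, mhsn_add_succ, add_comm]
    simp only [ih, sum_div, div_div, sum_antitoneTuples_succ, Fin.prod_univ_succ, Fin.cons_zero,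
      Fin.cons_succ]
    rw [sum_comm]
    simp only [Nat.add_sub_add_right, Nat.sub_zero, univ_eq_empty, prod_empty, div_one, mul_comm]

theorem mhsn_add_eq_add_sum_antitoneTuples (m r n : ℕ) :
    mhsn (n + r) m = mhsn n m + ∑ j ∈ Icc 1 m, ∑ i ∈ antitoneTuples j r,
      mhsn n (m - j) / ∏ a : Fin j, ((n : ℝ) + i a) := by
  rw [mhsn_add_eq_sum_range_antitoneTuples, range_eq_Ico,
    sum_eq_sum_Ico_succ_bot (Nat.succ_pos m), antitoneTuples_zero]
  simp [Ico_add_one_right_eq_Icc]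

lemma mhsn_nonneg (m n : ℕ) : 0 ≤ mhsn n m := by
  induction m generalizing n with
  | zero => exact zero_le_one
  | succ m ih => exact sum_nonneg fun k _ => div_nonneg (ih k) k.cast_nonneg

lemma sum_Icc_one_div_sqrt_le (n : ℕ) : ∑ k ∈ Icc 1 n, 1 / √k ≤ 2 * √n := by
  induction n with
  | zero => simp
  | succ n ih =>
    rw [sum_Icc_succ_top (by omega), Nat.cast_succ]
    have hpos : 0 < √((n : ℝ) + 1) := Real.sqrt_pos.2 (by positivity)
    have hstep : 1 / √((n : ℝ) + 1) ≤ 2 * √((n : ℝ) + 1) - 2 * √n := by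
      rw [div_le_iff₀ hpos]
      nlinarith [sq_nonneg (√((n : ℝ) + 1) - √n), Real.sqrt_nonneg (n : ℝ),
        Real.sq_sqrt n.cast_nonneg, Real.sq_sqrt (by positivity : (0 : ℝ) ≤ n + 1)]
    linarith

lemma mhsn_le_two_pow_mul_sqrt (m : ℕ) {n : ℕ} (hn : 1 ≤ n) : mhsn n m ≤ 2 ^ m * √n := by
  induction m generalizing n with
  | zero => simpa [mhsn] using Real.one_le_sqrt.2 (Nat.one_le_cast.2 hn)
  | succ m ih =>
    calc mhsn n (m + 1) = ∑ k ∈ Icc 1 n, mhsn k m / k := rfl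
      _ ≤ ∑ k ∈ Icc 1 n, 2 ^ m * (1 / √k) := by
        refine sum_le_sum fun k hk => ?_
        rw [← Real.sqrt_div_self', mul_div_assoc']
        exact div_le_div_of_nonneg_right (ih (mem_Icc.1 hk).1) k.cast_nonneg
      _ ≤ 2 ^ m * (2 * √n) := by
        rw [← mul_sum]
        exact mul_le_mul_of_nonneg_left (sum_Icc_one_div_sqrt_le n) (by positivity)
      _ = 2 ^ (m + 1) * √n := by ring

lemma summable_sqrt_div_sq : Summable fun n : ℕ => √((n : ℝ) + 1) / ((n : ℝ) + 1) ^ 2 := by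
  have h := (summable_nat_add_iff 1).2 (Real.summable_nat_rpow.2 (by norm_num : -(3 / 2 : ℝ) < -1))
  refine h.congr fun n => ?_
  have hpos : (0 : ℝ) < n + 1 := by positivity
  rw [Nat.cast_add_one, Real.sqrt_eq_rpow, ← Real.rpow_natCast _ 2, ← Real.rpow_sub hpos]
  norm_num

lemma summable_mhsn_div_pow (m : ℕ) {p : ℕ} (hp : 2 ≤ p) :
    Summable fun n : ℕ => mhsn (n + 1) m / ((n : ℝ) + 1) ^ p := by
  refine (summable_sqrt_div_sq.mul_left (2 ^ m)).of_nonneg_of_le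
    (fun n => div_nonneg (mhsn_nonneg m _) (by positivity)) fun n => ?_
  have hnum := mhsn_le_two_pow_mul_sqrt m (Nat.le_add_left 1 n)
  rw [Nat.cast_add_one] at hnum
  rw [mul_div_assoc']
  exact div_le_div₀ (by positivity) hnum (by positivity)
    (pow_le_pow_right₀ (by linarith [n.cast_nonneg (α := ℝ)]) hp)

lemma summable_mhsn_div_pow_mul_prod (m : ℕ) {p j : ℕ} (hp : 2 ≤ p) (i : Fin j → ℕ) :
    Summable fun n : ℕ =>
      mhsn (n + 1) m / (((n : ℝ) + 1) ^ p * ∏ a : Fin j, ((n : ℝ) + 1 + i a)) := by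
  refine (summable_mhsn_div_pow m hp).of_nonneg_of_le
    (fun n => div_nonneg (mhsn_nonneg m _) (by positivity)) fun n => ?_
  have hprod : 1 ≤ ∏ a : Fin j, ((n : ℝ) + 1 + i a) :=
    one_le_prod fun a _ => by linarith [n.cast_nonneg (α := ℝ), (i a).cast_nonneg (α := ℝ)]
  exact div_le_div_of_nonneg_left (mhsn_nonneg m _) (by positivity)
    (le_mul_of_one_le_right (by positivity) hprod)

theorem V_sum_decomposition_general (m p r : ℕ) (hp : 2 ≤ p) :
    ∑' n : ℕ, mhsn (n + 1 + r) m / (n + 1 : ℝ) ^ p =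
      mzvStar p m +
        ∑ j ∈ Finset.Icc 1 m,
          ∑ i ∈ (Fintype.piFinset fun _ : Fin j => Finset.Icc 1 r).filter
              (fun i => ∀ a b : Fin j, a ≤ b → i b ≤ i a),
            ∑' n : ℕ,
              mhsn (n + 1) (m - j) /
                ((n + 1 : ℝ) ^ p * ∏ a : Fin j, ((n + 1 : ℝ) + (i a : ℝ))) := by
  have hterm (n : ℕ) : mhsn (n + 1 + r) m / ((n : ℝ) + 1) ^ p =
      mhsn (n + 1) m / ((n : ℝ) + 1) ^ p + ∑ j ∈ Icc 1 m, ∑ i ∈ antitoneTuples j r,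
        mhsn (n + 1) (m - j) / (((n : ℝ) + 1) ^ p * ∏ a : Fin j, ((n : ℝ) + 1 + i a)) := by
    rw [mhsn_add_eq_add_sum_antitoneTuples, add_div]
    simp only [sum_div, div_div, Nat.cast_add_one, mul_comm (∏ _ : Fin _, _)]
  rw [tsum_congr hterm]
  exact ((summable_mhsn_div_pow m hp).hasSum.add <| hasSum_sum fun j _ =>
    hasSum_sum fun i _ => (summable_mhsn_div_pow_mul_prod (m - j) hp i).hasSum).tsum_eq

/-- formula (4.7): for `m ≥ 1`, `p ≥ 2`, `r ≥ 0`,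
`V_{m,r}(p) = ∑_{n=1}^∞ ζ_{n+r}^⋆({1}_m)/n^p = ζ^⋆(p,{1}_m)
  + ∑_{j=1}^m ∑_{1 ≤ i_j ≤ ⋯ ≤ i₁ ≤ r} ∑_{n=1}^∞ ζ_n^⋆({1}_{m-j})/(n^p (n+i₁)⋯(n+i_j))`. -/
theorem V_sum_decomposition (m p r : ℕ) (hm : 1 ≤ m) (hp : 2 ≤ p) :
    ∑' n : ℕ, mhsn (n + 1 + r) m / (n + 1 : ℝ) ^ p =
      mzvStar p m +
        ∑ j ∈ Finset.Icc 1 m,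
          ∑ i ∈ (Fintype.piFinset fun _ : Fin j => Finset.Icc 1 r).filter
              (fun i => ∀ a b : Fin j, a ≤ b → i b ≤ i a),
            ∑' n : ℕ,
              mhsn (n + 1) (m - j) /
                ((n + 1 : ℝ) ^ p * ∏ a : Fin j, ((n + 1 : ℝ) + (i a : ℝ))) :=
  V_sum_decomposition_general m p r hp
end
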